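/- Let K be a field of characteristic p > 0, let k ⊆ K be a perfect subfield, let m > 0, set q = p^m, and let f be an m-truncated group law over k. Let ∂ = (∂_n)_{0 ≤ n < q} be an f-iterative m-truncated HS-derivation on K such that ∂_n(a) = 0 for all a ∈ k and all n ≥ 1, and such that ∂_1 is not the zero map. Let C = {r ∈ K : ∂_n(r) = 0 for all n with 1 ≤ n < q}. Then C is a subfield of K and the degree [K : C] equals p^m. -/

import Mathlib

open Finset MvPolynomial

/-- `f ∈ k[X,Y]` is an `m`-truncated group law over `k` (for the prime `p`):
all monomials of `f` have both exponents `< p ^ m`, `f(X,0) = X`, `f(0,Y) = Y`, and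
`f(f(X,Y),Z) ≡ f(X,f(Y,Z))` modulo the ideal `(X^{p^m}, Y^{p^m}, Z^{p^m})`. -/
def IsTruncGroupLaw (p m : ℕ) {k : Type*} [Field k] (f : MvPolynomial (Fin 2) k) : Prop :=
  (∀ d ∈ f.support, d 0 < p ^ m ∧ d 1 < p ^ m) ∧
  (MvPolynomial.aeval ![(Polynomial.X : Polynomial k), 0] f = Polynomial.X) ∧
  (MvPolynomial.aeval ![0, (Polynomial.X : Polynomial k)] f = Polynomial.X) ∧
  (MvPolynomial.aeval
      ![MvPolynomial.aeval ![(MvPolynomial.X 0 : MvPolynomial (Fin 3) k), MvPolynomial.X 1] f,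
        MvPolynomial.X 2] f -
    MvPolynomial.aeval
      ![(MvPolynomial.X 0 : MvPolynomial (Fin 3) k),
        MvPolynomial.aeval ![(MvPolynomial.X 1 : MvPolynomial (Fin 3) k), MvPolynomial.X 2] f] f
    ∈ Ideal.span {(MvPolynomial.X 0 : MvPolynomial (Fin 3) k) ^ p ^ m,
        MvPolynomial.X 1 ^ p ^ m, MvPolynomial.X 2 ^ p ^ m})

/-- `D` is an `m`-truncated HS-derivation on `R` (for the prime `p`):
only the maps `D n` for `n < p ^ m` are relevant. -/
def IsTruncHSDeriv (p m : ℕ) {R : Type*} [CommRing R] (D : ℕ → R → R) : Prop :=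
  (∀ n, n < p ^ m → ∀ x y, D n (x + y) = D n x + D n y) ∧
  (∀ x, D 0 x = x) ∧
  (∀ n, n < p ^ m → ∀ x y, D n (x * y) = ∑ ij ∈ Finset.HasAntidiagonal.antidiagonal n, D ij.1 x * D ij.2 y)

/-- `D` is an `f`-iterative `m`-truncated HS-derivation (an `f`-derivation):
`D j ∘ D i = Σ_{n < p^m} c_{i,j,n} • D n` where `c_{i,j,n}` is the coefficient of
`X^i Y^j` in `f ^ n`. -/
def IsFIterativeTrunc (p m : ℕ) {k : Type*} [Field k] (f : MvPolynomial (Fin 2) k)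
    {R : Type*} [CommRing R] [Algebra k R] (D : ℕ → R → R) : Prop :=
  ∀ i j : ℕ, i < p ^ m → j < p ^ m → ∀ r,
    D j (D i r) = ∑ n ∈ Finset.range (p ^ m),
      MvPolynomial.coeff (Finsupp.single (0 : Fin 2) i + Finsupp.single (1 : Fin 2) j) (f ^ n)
        • D n r

/-!
The maps `d 0, …, d (q - 1)`, `q = p ^ m`, are linearly independent over `K`: evaluating a shortest
relation `∑ gₙ dₙ = 0` at a product `x y` and subtracting `y` times the relation at `x` leaves, by
the Leibniz rule, a shorter relation in `x` whose top coefficient is `g_N · d 1 y`. Hence the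
vectors `(dₙ r)ₙ`, `r ∈ K`, span `K^q`, and those of some `x₁, …, x_q` form a basis.
If `y` has coordinates `cₜ` in this basis, apply `d u` to `dₙ y = ∑ cₜ dₙ xₜ`: iterativity makes
`d u ∘ d n` a `K`-combination of the `d l`, so it respects this identity, whereas the Leibniz rule,
with `d w cₜ = 0` for `0 < w < u` by induction, adds the term `∑ (d u cₜ) dₙ xₜ`, which therefore
vanishes. So the `cₜ` are constants, `y = ∑ cₜ xₜ` (take `n = 0`), and the `xₜ` form a basis of
`K` over the constants.
-/

namespace IsTruncHSDeriv

section CommRing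

variable {p m : ℕ} {R : Type*} [CommRing R] {d : ℕ → R → R}

theorem map_add (hd : IsTruncHSDeriv p m d) {n : ℕ} (hn : n < p ^ m) (x y : R) :
    d n (x + y) = d n x + d n y :=
  hd.1 n hn x y

theorem d_zero_apply (hd : IsTruncHSDeriv p m d) (x : R) : d 0 x = x :=
  hd.2.1 x

theorem map_mul (hd : IsTruncHSDeriv p m d) {n : ℕ} (hn : n < p ^ m) (x y : R) :
    d n (x * y) = ∑ ij ∈ antidiagonal n, d ij.1 x * d ij.2 y :=
  hd.2.2 n hn x y

def toAddMonoidHom (hd : IsTruncHSDeriv p m d) {n : ℕ} (hn : n < p ^ m) : R →+ R :=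
  AddMonoidHom.mk' (d n) (hd.map_add hn)

theorem map_sum (hd : IsTruncHSDeriv p m d) {n : ℕ} (hn : n < p ^ m) {ι : Type*}
    (s : Finset ι) (g : ι → R) : d n (∑ i ∈ s, g i) = ∑ i ∈ s, d n (g i) :=
  _root_.map_sum (hd.toAddMonoidHom hn) g s

theorem map_mul_of_forall_lt (hd : IsTruncHSDeriv p m d) {n : ℕ} (hn : n < p ^ m) (hn1 : 1 ≤ n)
    {c : R} (hc : ∀ i, 1 ≤ i → i < n → d i c = 0) (x : R) :
    d n (c * x) = c * d n x + d n c * x := by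
  obtain ⟨n, rfl⟩ : ∃ n', n = n' + 1 := ⟨n - 1, by lia⟩
  have hmid : ∑ i ∈ range n, d (i + 1) c * d (n + 1 - (i + 1)) x = 0 :=
    sum_eq_zero fun i hi => by rw [hc (i + 1) (by lia) (by simpa using hi), zero_mul]
  rw [hd.map_mul hn, Nat.sum_antidiagonal_eq_sum_range_succ fun i j => d i c * d j x,
    sum_range_succ, sum_range_succ', hmid, Nat.sub_self, Nat.sub_zero, hd.d_zero_apply,
    hd.d_zero_apply, zero_add]

theorem map_one (hd : IsTruncHSDeriv p m d) {n : ℕ} (hn1 : 1 ≤ n) (hn : n < p ^ m) :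
    d n 1 = 0 := by
  induction n using Nat.strong_induction_on with
  | _ n ih =>
    have h := hd.map_mul_of_forall_lt hn hn1 (fun i hi1 hi => ih i hi hi1 (hi.trans hn)) 1
    rw [mul_one] at h
    linear_combination -h

theorem sum_mul_map_mul (hd : IsTruncHSDeriv p m d) {M : ℕ} (hM : M ≤ p ^ m) (g : ℕ → R)
    (x y : R) :
    ∑ n ∈ range M, g n * d n (x * y) =
      ∑ i ∈ range M, (∑ j ∈ range (M - i), g (i + j) * d j y) * d i x := by
  calc ∑ n ∈ range M, g n * d n (x * y)
      = ∑ n ∈ range M, ∑ i ∈ range (n + 1), g (i + (n - i)) * d (n - i) y * d i x := by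
        refine sum_congr rfl fun n hn => ?_
        rw [hd.map_mul (by grind), mul_sum,
          Nat.sum_antidiagonal_eq_sum_range_succ fun i j => g n * (d i x * d j y)]
        refine sum_congr rfl fun i hi => ?_
        rw [Nat.add_sub_cancel' (by grind)]
        ring
    _ = ∑ i ∈ range M, ∑ j ∈ range (M - i), g (i + j) * d j y * d i x :=
        sum_range_diag_flip M fun i j => g (i + j) * d j y * d i x
    _ = _ := by simp only [sum_mul]

theorem eq_zero_of_forall_sum_mul_eq_zero [NoZeroDivisors R] (hd : IsTruncHSDeriv p m d)
    (hne : d 1 ≠ 0) {N : ℕ} (hN : N < p ^ m) {g : ℕ → R}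
    (hg : ∀ x, ∑ n ∈ range (N + 1), g n * d n x = 0) {n : ℕ} (hn : n ≤ N) : g n = 0 := by
  induction N generalizing g n with
  | zero =>
    obtain rfl : n = 0 := by lia
    simpa [hd.d_zero_apply] using hg 1
  | succ N ih =>
    obtain ⟨y₀, hy₀⟩ : ∃ y, d 1 y ≠ 0 := Function.ne_iff.mp hne
    have hshift : ∀ y x, ∑ i ∈ range (N + 1),
        (∑ j ∈ range (N + 1 - i), g (i + (j + 1)) * d (j + 1) y) * d i x = 0 := by
      intro y x
      have hexp := hd.sum_mul_map_mul hN g x y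
      have hsplit : ∀ i ∈ range (N + 1 + 1),
          (∑ j ∈ range (N + 1 + 1 - i), g (i + j) * d j y) * d i x =
            (∑ j ∈ range (N + 1 - i), g (i + (j + 1)) * d (j + 1) y) * d i x +
              y * (g i * d i x) := by
        intro i hi
        rw [show N + 1 + 1 - i = N + 1 - i + 1 by grind, sum_range_succ', hd.d_zero_apply,
          add_zero]
        ring
      rw [hg (x * y), sum_congr rfl hsplit, sum_add_distrib, ← mul_sum, hg x, mul_zero,
        add_zero, sum_range_succ, Nat.sub_self, sum_range_zero, zero_mul, add_zero] at hexp
      exact hexp.symm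
    have htop : g (N + 1) = 0 := by
      have h := ih (by lia) (hshift y₀) le_rfl
      rw [Nat.add_sub_cancel_left, sum_range_one, zero_add] at h
      exact (mul_eq_zero.mp h).resolve_right hy₀
    rcases hn.eq_or_lt with rfl | hlt
    · exact htop
    · refine ih (by lia) (fun x => ?_) (by lia)
      rw [← hg x, sum_range_succ _ (N + 1), htop, zero_mul, add_zero]

end CommRing

section Field

variable {p m : ℕ} {K : Type*} [Field K] {d : ℕ → K → K}

def constants (hd : IsTruncHSDeriv p m d) : Subfield K where
  carrier := {r | ∀ n, 1 ≤ n → n < p ^ m → d n r = 0}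
  zero_mem' n _ hn := map_zero (hd.toAddMonoidHom hn)
  one_mem' n hn1 hn := hd.map_one hn1 hn
  add_mem' hx hy n hn1 hn := by
    rw [hd.map_add hn, hx n hn1 hn, hy n hn1 hn, add_zero]
  neg_mem' {x} hx n hn1 hn := by
    change hd.toAddMonoidHom hn (-x) = 0
    rw [map_neg]
    exact neg_eq_zero.mpr (hx n hn1 hn)
  mul_mem' {x y} hx hy n hn1 hn := by
    rw [hd.map_mul_of_forall_lt hn hn1 (fun i hi1 hi => hx i hi1 (hi.trans hn)), hx n hn1 hn,
      hy n hn1 hn, mul_zero, zero_mul, add_zero]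
  inv_mem' x hx n hn1 hn := by
    rcases eq_or_ne x 0 with rfl | hx0
    · rw [inv_zero]
      exact map_zero (hd.toAddMonoidHom hn)
    · have h := hd.map_mul_of_forall_lt hn hn1 (fun i hi1 hi => hx i hi1 (hi.trans hn)) x⁻¹
      rw [mul_inv_cancel₀ hx0, hd.map_one hn1 hn, hx n hn1 hn, zero_mul, add_zero] at h
      exact (mul_eq_zero.mp h.symm).resolve_left hx0

theorem map_mul_of_mem_constants (hd : IsTruncHSDeriv p m d) {c : K} (hc : c ∈ hd.constants)
    {n : ℕ} (hn : n < p ^ m) (x : K) : d n (c * x) = c * d n x := by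
  rcases Nat.eq_zero_or_pos n with rfl | hn1
  · rw [hd.d_zero_apply, hd.d_zero_apply]
  · rw [hd.map_mul_of_forall_lt hn hn1 (fun i hi1 hi => hc i hi1 (hi.trans hn)), hc n hn1 hn,
      zero_mul, add_zero]

def taylorMap (hd : IsTruncHSDeriv p m d) : K →ₗ[hd.constants] (Fin (p ^ m) → K) where
  toFun r n := d n r
  map_add' x y := funext fun n => hd.map_add n.2 x y
  map_smul' c x := funext fun n => hd.map_mul_of_mem_constants c.2 n.2 x

theorem taylorMap_apply (hd : IsTruncHSDeriv p m d) (r : K) (n : Fin (p ^ m)) :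
    hd.taylorMap r n = d n r :=
  rfl

theorem span_range_taylorMap_eq_top (hd : IsTruncHSDeriv p m d) (hne : d 1 ≠ 0) :
    Submodule.span K (Set.range hd.taylorMap) = ⊤ := by
  by_contra hW
  obtain ⟨φ, hφ, hφW⟩ :=
    Submodule.exists_dual_map_eq_bot_of_lt_top (lt_top_iff_ne_top.mpr hW) inferInstance
  set g : ℕ → K := fun n => φ fun j => if n = (j : ℕ) then 1 else 0
  have hφg : ∀ v, φ v = ∑ n : Fin (p ^ m), g n * v n := fun v => by
    rw [LinearMap.pi_apply_eq_sum_univ]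
    simp only [g, Fin.val_inj, smul_eq_mul, mul_comm]
  have hrel : ∀ x, φ (hd.taylorMap x) = 0 := fun x => by
    have hx : φ (hd.taylorMap x) ∈ (Submodule.span K (Set.range hd.taylorMap)).map φ :=
      Submodule.mem_map_of_mem (Submodule.subset_span ⟨x, rfl⟩)
    rwa [hφW, Submodule.mem_bot] at hx
  have hg : ∀ n : Fin (p ^ m), g n = 0 := fun n => by
    have hn := n.isLt
    have hq : p ^ m - 1 + 1 = p ^ m := by omega
    refine hd.eq_zero_of_forall_sum_mul_eq_zero hne (N := p ^ m - 1) (by omega) (fun x => ?_)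
      (by omega)
    rw [hq, ← Fin.sum_univ_eq_sum_range, ← hrel x, hφg]
    rfl
  exact hφ (LinearMap.ext fun v => by simp [hφg, hg])

theorem mem_constants_of_taylorMap_eq_sum (hd : IsTruncHSDeriv p m d)
    (hcomp : ∀ i j, i < p ^ m → j < p ^ m →
      ∃ a : ℕ → K, ∀ r, d j (d i r) = ∑ n ∈ range (p ^ m), a n * d n r)
    {ι : Type*} [Fintype ι] {x : ι → K} (hx : LinearIndependent K (hd.taylorMap ∘ x)) {y : K}
    {c : ι → K} (hy : hd.taylorMap y = ∑ t, c t • hd.taylorMap (x t)) (t : ι) :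
    c t ∈ hd.constants := by
  have hcoord : ∀ l, l < p ^ m → d l y = ∑ t, c t * d l (x t) := fun l hl => by
    simpa [taylorMap_apply] using congrFun hy ⟨l, hl⟩
  suffices h : ∀ u, 1 ≤ u → u < p ^ m → ∀ t, d u (c t) = 0 from fun u hu1 hu => h u hu1 hu t
  intro u
  induction u using Nat.strong_induction_on with
  | _ u ih =>
  intro hu1 hu
  refine Fintype.linearIndependent_iff.mp hx (fun t => d u (c t)) (funext fun n => ?_)
  obtain ⟨a, ha⟩ := hcomp n u n.2 hu
  have hcomb : d u (d n y) = ∑ t, c t * d u (d n (x t)) := by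
    calc d u (d n y) = ∑ l ∈ range (p ^ m), a l * ∑ t, c t * d l (x t) := by
          rw [ha]
          exact sum_congr rfl fun l hl => by rw [hcoord l (mem_range.mp hl)]
      _ = ∑ t, c t * ∑ l ∈ range (p ^ m), a l * d l (x t) := by
          simp_rw [mul_sum, mul_left_comm (a _)]
          exact sum_comm
      _ = ∑ t, c t * d u (d n (x t)) := by simp only [ha]
  have hleibniz : d u (d n y) = ∑ t, (c t * d u (d n (x t)) + d u (c t) * d n (x t)) := by
    rw [hcoord n n.2, hd.map_sum hu]
    exact sum_congr rfl fun t _ =>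
      hd.map_mul_of_forall_lt hu hu1 (fun i hi1 hi => ih i hi hi1 (hi.trans hu) t) _
  rw [sum_add_distrib] at hleibniz
  simpa [taylorMap_apply] using hcomb.symm.trans hleibniz

theorem finrank_constants (hd : IsTruncHSDeriv p m d) (hq : 0 < p ^ m) (hne : d 1 ≠ 0)
    (hcomp : ∀ i j, i < p ^ m → j < p ^ m →
      ∃ a : ℕ → K, ∀ r, d j (d i r) = ∑ n ∈ range (p ^ m), a n * d n r) :
    Module.finrank hd.constants K = p ^ m := by
  obtain ⟨ι, x, -, hspan, hli⟩ := exists_linearIndependent' K hd.taylorMap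
  let b : Module.Basis ι K (Fin (p ^ m) → K) :=
    .mk hli (by rw [hspan, hd.span_range_taylorMap_eq_top hne])
  have : Finite ι := Module.Finite.finite_basis b
  have := Fintype.ofFinite ι
  have hliC : LinearIndependent hd.constants x :=
    (hli.restrict_scalars' hd.constants).of_comp hd.taylorMap
  have hspanC : ⊤ ≤ Submodule.span hd.constants (Set.range x) := by
    rintro y -
    have hy := (b.sum_repr (hd.taylorMap y)).symm
    simp only [b, Module.Basis.mk_apply, Function.comp_apply] at hy
    have hc := hd.mem_constants_of_taylorMap_eq_sum hcomp hli hy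
    have hy0 := congrFun hy ⟨0, hq⟩
    simp only [taylorMap_apply, hd.d_zero_apply, Finset.sum_apply, Pi.smul_apply,
      smul_eq_mul] at hy0
    rw [hy0]
    exact Submodule.sum_mem _ fun t _ =>
      Submodule.smul_mem _ (⟨_, hc t⟩ : hd.constants) (Submodule.subset_span ⟨t, rfl⟩)
  rw [Module.finrank_eq_nat_card_basis (.mk hliC hspanC), ← Module.finrank_eq_nat_card_basis b,
    Module.finrank_fin_fun]

end Field

end IsTruncHSDeriv

theorem IsFIterativeTrunc.exists_comp_eq_sum {p m : ℕ} {k : Type*} [Field k]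
    {f : MvPolynomial (Fin 2) k} {R : Type*} [CommRing R] [Algebra k R] {d : ℕ → R → R}
    (hiter : IsFIterativeTrunc p m f d) (i j : ℕ) (hi : i < p ^ m) (hj : j < p ^ m) :
    ∃ a : ℕ → R, ∀ r, d j (d i r) = ∑ n ∈ range (p ^ m), a n * d n r :=
  ⟨fun n => algebraMap k R (coeff (Finsupp.single 0 i + Finsupp.single 1 j) (f ^ n)),
    fun r => by simp only [hiter i j hi hj r, Algebra.smul_def]⟩

theorem f_deriv_constants_degree_general (p : ℕ) (hp : p.Prime) (m : ℕ)
    (k K : Type*) [Field k] [Field K] [Algebra k K]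
    (f : MvPolynomial (Fin 2) k)
    (d : ℕ → K → K)
    (hd : IsTruncHSDeriv p m d)
    (hiter : IsFIterativeTrunc p m f d)
    (hne : d 1 ≠ 0) :
    ∃ C : Subfield K,
      (∀ r : K, r ∈ C ↔ ∀ n : ℕ, 1 ≤ n → n < p ^ m → d n r = 0) ∧
      Module.finrank C K = p ^ m :=
  ⟨hd.constants, fun _ => Iff.rfl,
    hd.finrank_constants (pow_pos hp.pos m) hne hiter.exists_comp_eq_sum⟩

/-- The field of constants `C` of an `f`-derivation on `K` over a perfect subfield `k`,
with nonzero first component, is a subfield with `[K : C] = p ^ m`. -/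
theorem f_deriv_constants_degree (p : ℕ) (hp : p.Prime) (m : ℕ) (hm : 0 < m)
    (k K : Type*) [Field k] [PerfectField k] [Field K] [Algebra k K] [CharP K p]
    (f : MvPolynomial (Fin 2) k) (hf : IsTruncGroupLaw p m f)
    (d : ℕ → K → K)
    (hd : IsTruncHSDeriv p m d)
    (hiter : IsFIterativeTrunc p m f d)
    (hk : ∀ a : k, ∀ n : ℕ, 1 ≤ n → d n (algebraMap k K a) = 0)
    (hne : d 1 ≠ 0) :
    ∃ C : Subfield K,
      (∀ r : K, r ∈ C ↔ ∀ n : ℕ, 1 ≤ n → n < p ^ m → d n r = 0) ∧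
      Module.finrank C K = p ^ m :=
  f_deriv_constants_degree_general p hp m k K f d hd hiter hne
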